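/- Let f ∈ ℝ² \ ℤ², let R = {r^1, …, r^k} ⊆ ℝ², and let B_1 ∈ ℝ^{n_1×2} and B_2 ∈ ℝ^{n_2×2} be matrices such that M(B_1) and M(B_2) are lattice-free and all ray intersections are integral, i.e., P(B_1, R) ⊆ ℤ² and P(B_2, R) ⊆ ℤ². Then γ(B_1) = γ(B_2). -/

import Mathlib

open Matrix Pointwise

noncomputable section

/-- A point of `ℝ^m` is an integer point if all its coordinates are integers. -/
def IsIntPoint {m : ℕ} (x : Fin m → ℝ) : Prop := ∀ i, ∃ z : ℤ, x i = (z : ℝ)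

/-- A set is lattice-free if its interior contains no integer point. -/
def IsLatticeFree {m : ℕ} (S : Set (Fin m → ℝ)) : Prop :=
  ∀ x ∈ interior S, ¬ IsIntPoint x

/-- `M(B) = {x ∈ ℝ^m | bⁱ · (x - f) ≤ 1 for all rows bⁱ of B}`. -/
def Mset {n m : ℕ} (f : Fin m → ℝ) (B : Matrix (Fin n) (Fin m) ℝ) :
    Set (Fin m → ℝ) :=
  {x | ∀ i, B i ⬝ᵥ (x - f) ≤ 1}

/-- `ψ_B(r) = max_i bⁱ · r` (the Minkowski functional of `M(B)`). -/
def psi {n m : ℕ} (B : Matrix (Fin n) (Fin m) ℝ) (r : Fin m → ℝ) : ℝ :=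
  ⨆ i, B i ⬝ᵥ r

/-- `γ(B) = (ψ_B(r^1), …, ψ_B(r^k))`. -/
def gammaVec {n k : ℕ} (r : Fin k → Fin 2 → ℝ) (B : Matrix (Fin n) (Fin 2) ℝ) :
    Fin k → ℝ :=
  fun j => psi B (r j)

/-- The nonnegative orthant `ℝ^k_+`. -/
def orthant (k : ℕ) : Set (Fin k → ℝ) := {x | ∀ i, 0 ≤ x i}

/-- `Δ = {γ(B) | B ∈ ℝ^{3×2}, M(B) lattice-free}`. -/
def Delta {k : ℕ} (f : Fin 2 → ℝ) (r : Fin k → Fin 2 → ℝ) : Set (Fin k → ℝ) :=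
  {g | ∃ B : Matrix (Fin 3) (Fin 2) ℝ, IsLatticeFree (Mset f B) ∧ g = gammaVec r B}

/-- `Δ' = cl(conv Δ) + ℝ^k_+` (Minkowski sum). -/
def Delta' {k : ℕ} (f : Fin 2 → ℝ) (r : Fin k → Fin 2 → ℝ) : Set (Fin k → ℝ) :=
  closure (convexHull ℝ (Delta f r)) + orthant k

/-- The triangle closure `T = {s ∈ ℝ^k_+ | γ · s ≥ 1 for all γ ∈ Δ}`. -/
def Tset {k : ℕ} (f : Fin 2 → ℝ) (r : Fin k → Fin 2 → ℝ) : Set (Fin k → ℝ) :=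
  {s | s ∈ orthant k ∧ ∀ g ∈ Delta f r, 1 ≤ g ⬝ᵥ s}

/-- `x` is an extreme point of `K`: `x ∈ K` and `x` is not the midpoint of two
points of `K` both different from `x`. -/
def IsExtremePt {E : Type*} [AddCommGroup E] [Module ℝ E] (K : Set E) (x : E) : Prop :=
  x ∈ K ∧ ¬ ∃ y₁ ∈ K, ∃ y₂ ∈ K, y₁ ≠ x ∧ y₂ ≠ x ∧ x = (2⁻¹ : ℝ) • (y₁ + y₂)

/-- A vector is rational if all its coordinates are rational. -/
def IsRatVec {m : ℕ} (x : Fin m → ℝ) : Prop := ∀ i, ∃ q : ℚ, x i = (q : ℝ)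

/-- A maximal lattice-free convex set. -/
def IsMaxLatticeFree {m : ℕ} (S : Set (Fin m → ℝ)) : Prop :=
  Convex ℝ S ∧ IsLatticeFree S ∧
    ∀ S' : Set (Fin m → ℝ), Convex ℝ S' → IsLatticeFree S' → S ⊆ S' → S' = S

/-! The proof is a comparison of the two gauge functions along each ray. Lattice-freeness forces
`ψ_B ≥ 0`: if `bⁱ · r < 0` for every row, `M(B)` contains balls of unbounded radius around the
points `f + t r`, hence integer points in its interior. If `ψ_{B₁}(r) > ψ_{B₂}(r)`, then
`ψ_{B₁}(r) > 0`, and the integral ray intersection `f + r / ψ_{B₁}(r)` satisfies every inequality of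
`M(B₂)` strictly, so it lies in the interior of `M(B₂)`, which is impossible. By symmetry the two
values agree. -/

section RayIntersections

variable {n m : ℕ} {f : Fin m → ℝ}

lemma mem_interior_Mset {B : Matrix (Fin n) (Fin m) ℝ} {x : Fin m → ℝ}
    (hx : ∀ i, B i ⬝ᵥ (x - f) < 1) : x ∈ interior (Mset f B) := by
  have hopen : IsOpen {y : Fin m → ℝ | ∀ i, B i ⬝ᵥ (y - f) < 1} := by
    simp only [Set.ofPred_forall]
    exact isOpen_iInter_of_finite fun i =>
      isOpen_lt (by simp only [dotProduct]; fun_prop) continuous_const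
  exact interior_maximal (fun y hy i => (hy i).le) hopen hx

lemma IsLatticeFree.exists_one_le_dotProduct {B : Matrix (Fin n) (Fin m) ℝ}
    (h : IsLatticeFree (Mset f B)) {z : Fin m → ℝ} (hz : IsIntPoint z) :
    ∃ i, 1 ≤ B i ⬝ᵥ (z - f) := by
  by_contra! hlt
  exact h z (mem_interior_Mset hlt) hz

lemma dotProduct_le_psi (B : Matrix (Fin n) (Fin m) ℝ) (r : Fin m → ℝ) (i : Fin n) :
    B i ⬝ᵥ r ≤ psi B r :=
  le_ciSup (f := fun i => B i ⬝ᵥ r) (Set.finite_range _).bddAbove i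

lemma dotProduct_le_mul_sum_abs {u v : Fin m → ℝ} {c : ℝ} (hv : ∀ j, |v j| ≤ c) :
    u ⬝ᵥ v ≤ c * ∑ j, |u j| := by
  rw [Finset.mul_sum]
  refine Finset.sum_le_sum fun j _ => ?_
  calc u j * v j ≤ |u j| * |v j| := by rw [← abs_mul]; exact le_abs_self _
    _ ≤ c * |u j| := by rw [mul_comm c]; exact mul_le_mul_of_nonneg_left (hv j) (abs_nonneg _)

lemma exists_isIntPoint_abs_sub_le_half (x : Fin m → ℝ) :
    ∃ z, IsIntPoint z ∧ ∀ j, |z j - x j| ≤ 1 / 2 :=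
  ⟨fun j => round (x j), fun j => ⟨round (x j), rfl⟩,
    fun j => by rw [abs_sub_comm]; exact abs_sub_round (x j)⟩

lemma psi_nonneg_of_isLatticeFree {B : Matrix (Fin n) (Fin m) ℝ}
    (h : IsLatticeFree (Mset f B)) (r : Fin m → ℝ) : 0 ≤ psi B r := by
  by_contra! hneg
  set C : ℝ := ∑ i, ∑ j, |B i j|
  have hC : ∀ i, ∑ j, |B i j| ≤ C := fun i =>
    Finset.single_le_sum (f := fun i => ∑ j, |B i j|)
      (fun i _ => Finset.sum_nonneg fun j _ => abs_nonneg _) (Finset.mem_univ i)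
  -- the drift `t ψ_B(r) = -C/2` absorbs the rounding error of every row
  set t : ℝ := C / (-2 * psi B r)
  have ht : 0 ≤ t := div_nonneg (by positivity) (by linarith)
  have htψ : t * psi B r = -(C / 2) := by
    rw [div_mul_eq_mul_div, div_eq_iff (by linarith)]; ring
  obtain ⟨z, hz, hround⟩ := exists_isIntPoint_abs_sub_le_half (f + t • r)
  obtain ⟨i, hi⟩ := h.exists_one_le_dotProduct hz
  have hsplit : B i ⬝ᵥ (z - f) = t * (B i ⬝ᵥ r) + B i ⬝ᵥ (z - (f + t • r)) := by
    rw [← smul_eq_mul, ← dotProduct_smul, ← dotProduct_add]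
    congr 1; abel
  have hdrift : t * (B i ⬝ᵥ r) ≤ -(C / 2) :=
    htψ ▸ mul_le_mul_of_nonneg_left (dotProduct_le_psi B r i) ht
  have herr : B i ⬝ᵥ (z - (f + t • r)) ≤ 1 / 2 * ∑ j, |B i j| :=
    dotProduct_le_mul_sum_abs fun j => hround j
  linarith [hC i]

lemma psi_le_psi_of_isIntPoint {n₁ n₂ : ℕ} {ρ : Fin m → ℝ}
    {B₁ : Matrix (Fin n₁) (Fin m) ℝ} {B₂ : Matrix (Fin n₂) (Fin m) ℝ}
    (h₂ : IsLatticeFree (Mset f B₂))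
    (hp₁ : 0 < psi B₁ ρ → IsIntPoint (f + (psi B₁ ρ)⁻¹ • ρ)) :
    psi B₁ ρ ≤ psi B₂ ρ := by
  by_contra! hlt
  have hψ₁ : 0 < psi B₁ ρ := (psi_nonneg_of_isLatticeFree h₂ ρ).trans_lt hlt
  obtain ⟨i, hi⟩ := h₂.exists_one_le_dotProduct (hp₁ hψ₁)
  have hbound : B₂ i ⬝ᵥ (f + (psi B₁ ρ)⁻¹ • ρ - f) < 1 := by
    rw [add_sub_cancel_left, dotProduct_smul, smul_eq_mul, inv_mul_lt_one₀ hψ₁]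
    exact (dotProduct_le_psi B₂ ρ i).trans_lt hlt
  exact hbound.not_ge hi

end RayIntersections

theorem stmt9_general (k n₁ n₂ : ℕ)
    (f : Fin 2 → ℝ) (r : Fin k → Fin 2 → ℝ)
    (B₁ : Matrix (Fin n₁) (Fin 2) ℝ) (B₂ : Matrix (Fin n₂) (Fin 2) ℝ)
    (h₁ : IsLatticeFree (Mset f B₁)) (h₂ : IsLatticeFree (Mset f B₂))
    (hp₁ : ∀ j, 0 < psi B₁ (r j) → IsIntPoint (f + (psi B₁ (r j))⁻¹ • r j))
    (hp₂ : ∀ j, 0 < psi B₂ (r j) → IsIntPoint (f + (psi B₂ (r j))⁻¹ • r j)) :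
    gammaVec r B₁ = gammaVec r B₂ :=
  funext fun j => le_antisymm
    (psi_le_psi_of_isIntPoint h₂ (hp₁ j)) (psi_le_psi_of_isIntPoint h₁ (hp₂ j))

/-- if all ray intersections of two lattice-free sets `M(B₁)`, `M(B₂)`
are integral, then `γ(B₁) = γ(B₂)`. -/
theorem stmt9 (k n₁ n₂ : ℕ) (hn₁ : 1 ≤ n₁) (hn₂ : 1 ≤ n₂)
    (f : Fin 2 → ℝ) (hf : ¬ IsIntPoint f) (r : Fin k → Fin 2 → ℝ)
    (B₁ : Matrix (Fin n₁) (Fin 2) ℝ) (B₂ : Matrix (Fin n₂) (Fin 2) ℝ)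
    (h₁ : IsLatticeFree (Mset f B₁)) (h₂ : IsLatticeFree (Mset f B₂))
    (hp₁ : ∀ j, 0 < psi B₁ (r j) → IsIntPoint (f + (psi B₁ (r j))⁻¹ • r j))
    (hp₂ : ∀ j, 0 < psi B₂ (r j) → IsIntPoint (f + (psi B₂ (r j))⁻¹ • r j)) :
    gammaVec r B₁ = gammaVec r B₂ :=
  stmt9_general k n₁ n₂ f r B₁ B₂ h₁ h₂ hp₁ hp₂
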